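/- arXiv:math/0703839 — 8 statements merged into one kernel-verified Lean document; each statement's English description precedes it below -/
import Mathlib

section
/- For all positive integers d and l, and any finite coloring of the positive integers (a partition of ℕ⁺ into finitely many cells), there exist a polynomial P of degree exactly d with nonnegative integer coefficients such that the values P(1), P(2), ..., P(l) all lie in a single cell of the partition. -/
/-- For all positive integers `d` and `l`, and any finite coloring of the positive
integers, there exists a polynomial of degree exactly `d` with nonnegative integer
coefficients whose values at `1, ..., l` are monochromatic. -/
theorem stmt_0 (d l : ℕ) (hd : 0 < d) (hl : 0 < l)
    (r : ℕ) (C : ℕ → Fin r) :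
    ∃ a : ℕ → ℕ, 0 < a d ∧ (∀ i, d < i → a i = 0) ∧
      ∃ c : Fin r, ∀ k, 1 ≤ k → k ≤ l →
        C (∑ i ∈ Finset.range (d + 1), a i * k ^ i) = c := by
  obtain ⟨a, ha, b, c, hc⟩ :=
    Combinatorics.exists_mono_homothetic_copy ((Finset.Icc 1 l).image (· ^ d)) C
  refine ⟨fun i => (if i = d then a else 0) + (if i = 0 then b else 0), ?_, ?_, c, ?_⟩
  · simpa [hd.ne'] using ha
  · intro i hi
    simp [hi.ne', (hd.trans hi).ne']
  · intro k hk1 hkl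
    have hsum : ∑ i ∈ Finset.range (d + 1),
        ((if i = d then a else 0) + (if i = 0 then b else 0)) * k ^ i
        = a * k ^ d + b := by
      simp only [add_mul, Finset.sum_add_distrib, ite_mul, zero_mul]
      rw [Finset.sum_ite_eq' _ d, Finset.sum_ite_eq' _ 0]
      simp [Finset.mem_range, hd, Nat.lt_succ_self]
    rw [hsum]
    have := hc (k ^ d) (Finset.mem_image_of_mem _ (Finset.mem_Icc.2 ⟨hk1, hkl⟩))
    simpa using this
end

section
/- For every positive integer l and every finite coloring of the positive integers, there exist positive integers a, b, c such that all l numbers a + b·k + c·k² for k = 1, ..., l receive the same color. -/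
/-- For every positive integer `l` and every finite coloring of the positive integers,
there exist positive integers `a, b, c` such that `a + b k + c k²` for `k = 1, ..., l`
all receive the same color. -/
theorem stmt_1 (l : ℕ) (hl : 0 < l) (r : ℕ) (C : ℕ → Fin r) :
    ∃ a b c : ℕ, 0 < a ∧ 0 < b ∧ 0 < c ∧
      ∃ col : Fin r, ∀ k, 1 ≤ k → k ≤ l → C (a + b * k + c * k ^ 2) = col := by
  have : Finite (Fin r) := inferInstance
  obtain ⟨a, ha, b, col, h⟩ :=
    Combinatorics.exists_mono_homothetic_copy
      ((Finset.Icc 1 l).image fun k => k + k ^ 2) (fun n => C (n + 1))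
  refine ⟨b + 1, a, a, Nat.succ_pos _, ha, ha, col, ?_⟩
  intro k hk1 hkl
  have := h (k + k ^ 2) (Finset.mem_image.mpr ⟨k, Finset.mem_Icc.mpr ⟨hk1, hkl⟩, rfl⟩)
  simpa [smul_eq_mul, mul_add, mul_comm, add_comm, add_left_comm, add_assoc] using this
end

section
/- Let A ⊆ ℕ be piecewise syndetic, and let d and l be positive integers. Then there exists a polynomial P of degree exactly d with positive integer coefficients such that P(1), P(2), ..., P(l) all belong to A. -/
/-- `A ⊆ ℕ` is piecewise syndetic: a finite union of translates `A - t`, `t ∈ F`,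
contains arbitrarily long intervals. -/
def PiecewiseSyndetic (A : Set ℕ) : Prop :=
  ∃ F : Finset ℕ, ∀ L : ℕ, ∃ a : ℕ, ∀ i < L, ∃ t ∈ F, a + i + t ∈ A

/-- A piecewise syndetic set contains the first `l` terms of a polynomial progression
of degree exactly `d` with positive integer coefficients. -/
theorem stmt_12 (A : Set ℕ) (hA : PiecewiseSyndetic A)
    (d l : ℕ) (hd : 0 < d) (hl : 0 < l) :
    ∃ a : ℕ → ℕ, (∀ i ≤ d, 0 < a i) ∧
      ∀ k, 1 ≤ k → k ≤ l → (∑ i ∈ Finset.range (d + 1), a i * k ^ i) ∈ A := by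
  classical
  obtain ⟨F, hF⟩ := hA
  choose a ha using hF
  choose t htF hAt using ha
  -- non-dependent version of t
  set t' : ℕ → ℕ → ℕ := fun L i => if h : i < L then t L i h else 0 with ht'
  set U : Ultrafilter ℕ := Filter.hyperfilter ℕ with hU
  -- for each n, an ultrafilter-limit color τ n ∈ F
  have key : ∀ n : ℕ, ∃ τ ∈ F, {L | n < L ∧ t' L n = τ} ∈ U := by
    intro n
    have h1 : {L : ℕ | n < L} ∈ U := by
      have : {L : ℕ | n < L} ∈ Filter.cofinite := by
        have : {L : ℕ | ¬ n < L}.Finite := by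
          apply Set.Finite.subset (Set.finite_Icc 0 n)
          intro x hx
          simp only [Set.mem_setOf_eq, not_lt] at hx
          simp [hx]
        exact this
      exact (Filter.hyperfilter_le_cofinite this : _)
    have h2 : {L : ℕ | n < L} ⊆ ⋃ τ ∈ (F : Set ℕ), {L | n < L ∧ t' L n = τ} := by
      intro L hL
      simp only [Set.mem_setOf_eq] at hL
      refine Set.mem_biUnion (htF L n hL) ?_
      simp only [Set.mem_setOf_eq, ht']
      exact ⟨hL, by simp [hL]⟩
    have h3 : (⋃ τ ∈ (F : Set ℕ), {L | n < L ∧ t' L n = τ}) ∈ U :=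
      Filter.mem_of_superset h1 h2
    exact (Ultrafilter.finite_biUnion_mem_iff F.finite_toSet).mp h3
  choose τ hτF hτU using key
  -- the pattern
  set f : ℕ → ℕ := fun k => ∑ i ∈ Finset.Icc 1 d, k ^ i with hf
  set S : Finset ℕ := (Finset.Icc 1 l).image (fun k => f k + 1) with hS
  -- Gallai's theorem
  obtain ⟨c, hc, b, t0, hmono⟩ :=
    Combinatorics.exists_mono_homothetic_copy S (fun n : ℕ => (⟨τ n, hτF n⟩ : ↥F))
  -- the positions
  set n : ℕ → ℕ := fun k => c * (f k + 1) + b with hn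
  -- pick a single L working for all k ∈ [1, l]
  have hint : (⋂ k ∈ Finset.Icc 1 l, {L | n k < L ∧ t' L (n k) = τ (n k)}) ∈ U :=
    (Filter.biInter_finset_mem _).mpr (fun k _ => hτU (n k))
  have hne : (⋂ k ∈ Finset.Icc 1 l, {L | n k < L ∧ t' L (n k) = τ (n k)}).Nonempty :=
    Ultrafilter.nonempty_of_mem hint
  obtain ⟨L, hL⟩ := hne
  have hLk : ∀ k ∈ Finset.Icc 1 l, n k < L ∧ t' L (n k) = τ (n k) := by
    intro k hk
    simpa using Set.mem_iInter₂.mp hL k hk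
  -- membership in A
  have hmem : ∀ k ∈ Finset.Icc 1 l, a L + n k + (t0 : ℕ) ∈ A := by
    intro k hk
    obtain ⟨h1, h2⟩ := hLk k hk
    have hmem' : a L + n k + t L (n k) h1 ∈ A := hAt L (n k) h1
    have ht'eq : t' L (n k) = t L (n k) h1 := by simp [ht', h1]
    have hτeq : τ (n k) = (t0 : ℕ) := by
      have hSk : f k + 1 ∈ S := Finset.mem_image_of_mem _ hk
      have := hmono (f k + 1) hSk
      have := congrArg Subtype.val this
      simpa [smul_eq_mul, hn] using this
    rw [← hτeq, ← h2, ht'eq]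
    exact hmem'
  -- the polynomial coefficients
  refine ⟨fun i => if i = 0 then a L + b + (t0 : ℕ) + c else c, ?_, ?_⟩
  · intro i _
    by_cases hi : i = 0 <;> simp [hi] <;> omega
  · intro k hk1 hkl
    have hk : k ∈ Finset.Icc 1 l := Finset.mem_Icc.mpr ⟨hk1, hkl⟩
    have := hmem k hk
    have hsum : (∑ i ∈ Finset.range (d + 1),
        (if i = 0 then a L + b + (t0 : ℕ) + c else c) * k ^ i)
        = a L + n k + (t0 : ℕ) := by
      have h0 : Finset.range (d + 1) = insert 0 (Finset.Icc 1 d) := by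
        ext i; simp only [Finset.mem_range, Finset.mem_insert, Finset.mem_Icc]; omega
      rw [h0, Finset.sum_insert (by simp)]
      have h1 : ∑ i ∈ Finset.Icc 1 d,
          (if i = 0 then a L + b + (t0 : ℕ) + c else c) * k ^ i
          = c * ∑ i ∈ Finset.Icc 1 d, k ^ i := by
        rw [Finset.mul_sum]
        refine Finset.sum_congr rfl (fun i hi => ?_)
        rw [if_neg]
        have := (Finset.mem_Icc.mp hi).1; omega
      rw [h1]
      rw [if_pos rfl]
      simp only [hn, hf, pow_zero, mul_one]
      ring
    rw [hsum]
    exact this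
end

section
/- Let m be a positive integer, let d₁, ..., d_m and l₁, ..., l_m be positive integers, and let ℕ be partitioned into finitely many cells. Then there exist polynomials P₁, ..., P_m, where P_i has degree exactly d_i and positive integer coefficients, such that all the values P_i(j), for 1 ≤ i ≤ m and 1 ≤ j ≤ l_i, lie in one single cell of the partition. -/
/-- Multidimensional polynomial van der Waerden: for any finite coloring of `ℕ` there
are polynomials `P i` of degree exactly `d i` with positive integer coefficients such
that all values `P i (j)`, `1 ≤ j ≤ l i`, have one single color. -/
theorem stmt_13 (m : ℕ) (hm : 0 < m) (d l : Fin m → ℕ)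
    (hd : ∀ i, 0 < d i) (hl : ∀ i, 0 < l i)
    (r : ℕ) (C : ℕ → Fin r) :
    ∃ col : Fin r, ∃ a : Fin m → ℕ → ℕ,
      (∀ i, ∀ k ≤ d i, 0 < a i k) ∧
      ∀ i, ∀ j, 1 ≤ j → j ≤ l i →
        C (∑ k ∈ Finset.range (d i + 1), a i k * j ^ k) = col := by
  obtain ⟨A, hA, B, col, hmono⟩ :=
    Combinatorics.exists_mono_homothetic_copy
      (Finset.image (fun p : Fin m × ℕ => ∑ k ∈ Finset.range (d p.1 + 1), p.2 ^ k)
        (Finset.univ ×ˢ Finset.range (Finset.univ.sup l + 1))) C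
  refine ⟨col, fun i k => if k = 0 then A + B else A, ?_, ?_⟩
  · intro i k _; dsimp only; split <;> omega
  · intro i j hj1 hj2
    have hmem : (∑ k ∈ Finset.range (d i + 1), j ^ k) ∈
        Finset.image (fun p : Fin m × ℕ => ∑ k ∈ Finset.range (d p.1 + 1), p.2 ^ k)
          (Finset.univ ×ˢ Finset.range (Finset.univ.sup l + 1)) := by
      refine Finset.mem_image.2 ⟨(i, j), ?_, rfl⟩
      simp only [Finset.mem_product, Finset.mem_univ, Finset.mem_range, true_and]
      exact Nat.lt_succ_of_le (hj2.trans (Finset.le_sup (Finset.mem_univ i)))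
    have h := hmono _ hmem
    rw [← h]
    congr 1
    rw [smul_eq_mul, Finset.mul_sum]
    have : ∀ k ∈ Finset.range (d i + 1),
        (if k = 0 then A + B else A) * j ^ k = A * j ^ k + (if k = 0 then B else 0) := by
      intro k _
      split <;> simp_all <;> ring
    rw [Finset.sum_congr rfl this, Finset.sum_add_distrib,
      Finset.sum_ite_eq' (Finset.range (d i + 1)) 0 (fun _ => B)]
    simp
end

section
/- Let A ⊆ ℕ be piecewise syndetic, m a positive integer, and d₁, ..., d_m, l₁, ..., l_m positive integers. Then there exist polynomials P₁, ..., P_m with positive integer coefficients and deg P_i = d_i such that P_i(j) ∈ A for all 1 ≤ i ≤ m and 1 ≤ j ≤ l_i. -/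
open Finset

/-- Compactness: counterexamples for every `L` would have an ultrafilter limit, a colouring of
`ℕ` without monochromatic progressions of length `N + 1`. -/
theorem exists_mono_arithProg_lt {κ : Type*} [Finite κ] (N : ℕ) :
    ∃ L, ∀ C : ℕ → κ, ∃ b r, 0 < r ∧ b + r * N < L ∧ ∃ c, ∀ s ≤ N, C (b + r * s) = c := by
  by_contra! hbad
  choose g hg using hbad
  obtain ⟨U, hU⟩ := Ultrafilter.exists_le (Filter.atTop : Filter ℕ)
  choose χ hχ using fun i => (U.map (g · i)).eq_pure_of_finite
  have hlim : ∀ i, ∀ᶠ L in (U : Filter ℕ), g L i = χ i := fun i =>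
    Ultrafilter.mem_map.1 (by rw [hχ i]; exact Set.mem_singleton _ : {χ i} ∈ U.map (g · i))
  obtain ⟨r, hr, b, c, hmono⟩ := Combinatorics.exists_mono_homothetic_copy (range (N + 1)) χ
  have hev : ∀ᶠ L in (U : Filter ℕ), b + r * N < L ∧ ∀ s ∈ range (N + 1), g L (r * s + b) = c :=
    ((Filter.eventually_gt_atTop _).filter_mono hU).and <|
      (Filter.eventually_all_finset _).2 fun s hs => (hlim _).mono fun L hL => hL.trans (hmono s hs)
  obtain ⟨L, hlt, hLmono⟩ := hev.exists
  obtain ⟨s, hs, hne⟩ := hg L b r hr hlt c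
  exact hne (add_comm b (r * s) ▸ hLmono s (mem_range.2 (Nat.lt_succ_of_le hs)))

theorem PiecewiseSyndetic.exists_arithProg {A : Set ℕ} (hA : PiecewiseSyndetic A) (N : ℕ) :
    ∃ b r, 0 < r ∧ ∀ s ≤ N, b + r * s ∈ A := by
  obtain ⟨F, hF⟩ := hA
  obtain ⟨t₀, ht₀, -⟩ := (hF 1).choose_spec 0 one_pos
  obtain ⟨L, hL⟩ := exists_mono_arithProg_lt (κ := F) N
  obtain ⟨a, ha⟩ := hF L
  have hcol : ∀ i, ∃ t : F, i < L → a + i + t ∈ A := fun i =>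
    if hi : i < L then
      let ⟨t, ht, htA⟩ := ha i hi
      ⟨⟨t, ht⟩, fun _ => htA⟩
    else ⟨⟨t₀, ht₀⟩, fun h => absurd h hi⟩
  choose C hC using hcol
  obtain ⟨b, r, hr, hlt, c, hc⟩ := hL C
  refine ⟨a + c + b, r, hr, fun s hs => ?_⟩
  have hsL : b + r * s < L := lt_of_le_of_lt (by gcongr) hlt
  simpa [hc s hs, add_assoc, add_comm, add_left_comm] using hC _ hsL

theorem sum_range_ite_mul_pow (b r d j : ℕ) :
    ∑ k ∈ range (d + 1), (if k = 0 then b + r else r) * j ^ k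
      = b + r * ∑ k ∈ range (d + 1), j ^ k := by
  simp only [sum_range_succ', Nat.succ_ne_zero, if_true, if_false, pow_zero, mul_add, mul_sum]
  ring

theorem stmt_14_general (A : Set ℕ) (hA : PiecewiseSyndetic A)
    (m : ℕ) (d l : Fin m → ℕ) :
    ∃ a : Fin m → ℕ → ℕ,
      (∀ i, ∀ k ≤ d i, 0 < a i k) ∧
      ∀ i, ∀ j, 1 ≤ j → j ≤ l i →
        (∑ k ∈ Finset.range (d i + 1), a i k * j ^ k) ∈ A := by
  obtain ⟨b, r, hr, hAP⟩ :=
    hA.exists_arithProg (univ.sup fun i => ∑ k ∈ range (d i + 1), l i ^ k)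
  refine ⟨fun _ k => if k = 0 then b + r else r, fun _ k _ => by dsimp only; split <;> omega,
    fun i j _ hj => ?_⟩
  rw [sum_range_ite_mul_pow]
  apply hAP
  calc ∑ k ∈ range (d i + 1), j ^ k
      ≤ ∑ k ∈ range (d i + 1), l i ^ k := sum_le_sum fun k _ => Nat.pow_le_pow_left hj k
    _ ≤ univ.sup fun i => ∑ k ∈ range (d i + 1), l i ^ k :=
        le_sup (f := fun i => ∑ k ∈ range (d i + 1), l i ^ k) (mem_univ i)

/-- Multidimensional piecewise syndetic version: a piecewise syndetic set contains the
first `l i` values of polynomials `P i` of degree exactly `d i` with positive integer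
coefficients, simultaneously for `i = 1, ..., m`. -/
theorem stmt_14 (A : Set ℕ) (hA : PiecewiseSyndetic A)
    (m : ℕ) (hm : 0 < m) (d l : Fin m → ℕ)
    (hd : ∀ i, 0 < d i) (hl : ∀ i, 0 < l i) :
    ∃ a : Fin m → ℕ → ℕ,
      (∀ i, ∀ k ≤ d i, 0 < a i k) ∧
      ∀ i, ∀ j, 1 ≤ j → j ≤ l i →
        (∑ k ∈ Finset.range (d i + 1), a i k * j ^ k) ∈ A :=
  stmt_14_general A hA m d l
end

section
/- For every positive integer l and every piecewise syndetic set A ⊆ ℕ, there exist positive integers a, b, c such that a + b·k + c·k² ∈ A for all k = 1, ..., l. -/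
open Combinatorics Finset

theorem Combinatorics.Line.exists_sum_apply_eq {α ι M : Type*} [Fintype ι] [AddCommMonoid M]
    (l : Line α ι) (f : α → M) : ∃ a > 0, ∃ b : M, ∀ x, ∑ i, f (l x i) = a • f x + b := by
  classical
  set s : Finset ι := {i | l.idxFun i = none}
  refine ⟨#s, card_pos.mpr ⟨l.proper.choose, by simpa [s] using l.proper.choose_spec⟩,
    ∑ i ∈ sᶜ, (l.idxFun i).elim 0 f, fun x => ?_⟩
  rw [← sum_add_sum_compl s]
  congr 1
  · rw [← sum_const]
    refine sum_congr rfl fun i hi => ?_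
    rw [l.apply_none _ _ (mem_filter.mp hi).2]
  · refine sum_congr rfl fun i hi => ?_
    obtain ⟨y, hy⟩ := Option.ne_none_iff_exists.mp (by simpa [s] using hi)
    rw [l.apply_some hy.symm, ← hy, Option.elim_some]

theorem exists_bound_mono_homothetic_copy (S : Finset ℕ) (κ : Type*) [Finite κ] :
    ∃ N, ∀ C : ℕ → κ, ∃ a > 0, ∃ (b : ℕ) (c : κ), ∀ s ∈ S, a * s + b ≤ N ∧ C (a * s + b) = c := by
  obtain ⟨ι, _, hι⟩ := Line.exists_mono_in_high_dimension S κ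
  refine ⟨Fintype.card ι * S.sup id, fun C => ?_⟩
  obtain ⟨l, c, hl⟩ := hι fun v => C (∑ i, (v i : ℕ))
  obtain ⟨a, ha, b, hab⟩ := l.exists_sum_apply_eq ((↑) : S → ℕ)
  refine ⟨a, ha, b, c, fun s hs => ⟨?_, ?_⟩⟩
  · calc a * s + b = ∑ i, (l ⟨s, hs⟩ i : ℕ) := (hab ⟨s, hs⟩).symm
      _ ≤ ∑ _i : ι, S.sup id := sum_le_sum fun i _ => le_sup (f := id) (l ⟨s, hs⟩ i).2
      _ = Fintype.card ι * S.sup id := by simp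
  · rw [← hl ⟨s, hs⟩]
    exact congrArg C (hab ⟨s, hs⟩).symm

theorem PiecewiseSyndetic.exists_homothetic_copy {A : Set ℕ} (hA : PiecewiseSyndetic A)
    (S : Finset ℕ) : ∃ a > 0, ∃ b, ∀ s ∈ S, a * s + b ∈ A := by
  obtain ⟨F, hF⟩ := hA
  obtain ⟨N, hN⟩ := exists_bound_mono_homothetic_copy S F
  obtain ⟨p, hp⟩ := hF (N + 1)
  -- clamping to `[0, N]` makes this a colouring of all of `ℕ` by the (possibly empty) type `F`
  have hcolour : ∀ i, ∃ t : F, p + min i N + t ∈ A := fun i => by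
    obtain ⟨t, ht, htA⟩ := hp (min i N) (by omega)
    exact ⟨⟨t, ht⟩, htA⟩
  choose C hC using hcolour
  obtain ⟨a, ha, b, c, habc⟩ := hN C
  refine ⟨a, ha, p + b + c, fun s hs => ?_⟩
  obtain ⟨hle, hcol⟩ := habc s hs
  have hmem := hC (a * s + b)
  rw [min_eq_left hle, hcol] at hmem
  convert hmem using 1
  ring

theorem stmt_15_general (l : ℕ) (A : Set ℕ) (hA : PiecewiseSyndetic A) :
    ∃ a b c : ℕ, 0 < a ∧ 0 < b ∧ 0 < c ∧
      ∀ k, 1 ≤ k → k ≤ l → a + b * k + c * k ^ 2 ∈ A := by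
  obtain ⟨a, ha, b, hab⟩ := hA.exists_homothetic_copy ((Icc 1 l).image fun k => k ^ 2 + k + 1)
  refine ⟨a + b, a, a, by omega, ha, ha, fun k hk₁ hkl => ?_⟩
  convert hab _ (mem_image_of_mem _ (mem_Icc.mpr ⟨hk₁, hkl⟩)) using 1
  ring

/-- Degree-2 case: every piecewise syndetic set contains `a + b k + c k²` for
`k = 1, ..., l` with `a, b, c` positive. -/
theorem stmt_15 (l : ℕ) (hl : 0 < l) (A : Set ℕ) (hA : PiecewiseSyndetic A) :
    ∃ a b c : ℕ, 0 < a ∧ 0 < b ∧ 0 < c ∧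
      ∀ k, 1 ≤ k → k ≤ l → a + b * k + c * k ^ 2 ∈ A :=
  stmt_15_general l A hA
end

section
/- Every finite coloring of ℕ admits a cell containing, for every pair (d, l) of positive integers simultaneously (i.e., one fixed cell working for all d and l), a polynomial progression of length l and degree exactly d with positive integer coefficients. -/
/-!
Taking the coefficients `a + b, a, a, …, a` turns the progression into
`k ↦ a * (1 + k + ⋯ + k ^ d) + b`, an affine image of finitely many natural numbers once
`d` and `k` are bounded by `n`. Gallai's theorem (`Combinatorics.exists_mono_homothetic_copy`)
makes such an image monochromatic, which gives a colour good for all `d, l ≤ n`; by pigeonhole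
one colour is good for infinitely many `n`, hence for all `d` and `l`.
-/

open Finset

def ContainsPolyProgression (A : Set ℕ) (d l : ℕ) : Prop :=
  ∃ a : ℕ → ℕ, (∀ i ≤ d, 0 < a i) ∧
    ∀ k, 1 ≤ k → k ≤ l → ∑ i ∈ range (d + 1), a i * k ^ i ∈ A

theorem sum_range_succ_ite_zero_mul_pow {R : Type*} [CommSemiring R] (a b x : R) (d : ℕ) :
    ∑ i ∈ range (d + 1), (if i = 0 then a + b else a) * x ^ i
      = a * ∑ i ∈ range (d + 1), x ^ i + b := by
  simp only [sum_range_succ', Nat.succ_ne_zero, if_false, if_true, pow_zero, mul_one, mul_add,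
    mul_sum]
  ring

theorem exists_color_containsPolyProgression_le {κ : Type*} [Finite κ] (C : ℕ → κ) (n : ℕ) :
    ∃ c, ∀ d ≤ n, ∀ l ≤ n, ContainsPolyProgression (C ⁻¹' {c}) d l := by
  let S : Finset ℕ :=
    (range (n + 1) ×ˢ range (n + 1)).image fun p => ∑ i ∈ range (p.1 + 1), p.2 ^ i
  obtain ⟨a, ha, b, c, hc⟩ := Combinatorics.exists_mono_homothetic_copy S C
  refine ⟨c, fun d hd l hl => ⟨fun i => if i = 0 then a + b else a, ?_, fun k _ hk => ?_⟩⟩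
  · intro i _
    dsimp only
    split_ifs <;> omega
  · have hS : ∑ i ∈ range (d + 1), k ^ i ∈ S :=
      mem_image_of_mem (a := (d, k)) _
        (mem_product.2 ⟨mem_range.2 (by omega), mem_range.2 (by omega)⟩)
    rw [Set.mem_preimage, Set.mem_singleton_iff, sum_range_succ_ite_zero_mul_pow, ← smul_eq_mul]
    exact hc _ hS

theorem Finite.exists_forall_of_antitone {κ : Type*} [Finite κ] (P : κ → ℕ → Prop)
    (hP : ∀ c, Antitone (P c)) (h : ∀ n, ∃ c, P c n) : ∃ c, ∀ n, P c n := by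
  choose g hg using h
  obtain ⟨c, hc⟩ := Finite.exists_infinite_fiber g
  refine ⟨c, fun n => ?_⟩
  obtain ⟨m, hm, hnm⟩ := (Set.infinite_coe_iff.1 hc).exists_gt n
  exact hP c hnm.le (hm ▸ hg m)

/-- Every finite coloring of `ℕ` has one fixed cell which contains, for every degree
`d` and every length `l` simultaneously, a polynomial progression of length `l` and
degree exactly `d` with positive integer coefficients. -/
theorem stmt_18 (r : ℕ) (C : ℕ → Fin r) :
    ∃ col : Fin r, ∀ d l : ℕ, 0 < d → 0 < l →
      ∃ a : ℕ → ℕ, (∀ i ≤ d, 0 < a i) ∧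
        ∀ k, 1 ≤ k → k ≤ l →
          C (∑ i ∈ Finset.range (d + 1), a i * k ^ i) = col := by
  obtain ⟨col, hcol⟩ := Finite.exists_forall_of_antitone
    (fun c n => ∀ d ≤ n, ∀ l ≤ n, ContainsPolyProgression (C ⁻¹' {c}) d l)
    (fun _ _ _ hmn h d hd l hl => h d (hd.trans hmn) l (hl.trans hmn))
    (exists_color_containsPolyProgression_le C)
  exact ⟨col, fun d l _ _ => hcol (max d l) d (le_max_left d l) l (le_max_right d l)⟩
end

section
/- Piecewise syndeticity is partition regular: if A ⊆ ℕ is piecewise syndetic and A = A₁ ∪ A₂, then A₁ or A₂ is piecewise syndetic. Consequently, in any finite partition of ℕ at least one cell is piecewise syndetic. -/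
lemma two_cell {A A₁ A₂ : Set ℕ} (hA : PiecewiseSyndetic A) (hsub : A ⊆ A₁ ∪ A₂) :
    PiecewiseSyndetic A₁ ∨ PiecewiseSyndetic A₂ := by
  by_cases h1 : PiecewiseSyndetic A₁
  · exact Or.inl h1
  right
  obtain ⟨F, hF⟩ := hA
  set m := F.sup id with hm
  unfold PiecewiseSyndetic at h1
  push_neg at h1
  refine ⟨Finset.range (m + 1), fun L => ?_⟩
  obtain ⟨L₁, hL₁⟩ := h1 (Finset.range (L + m + 1))
  obtain ⟨a, ha⟩ := hF (L₁ + L + m)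
  obtain ⟨j, hj, hjA⟩ := hL₁ a
  refine ⟨a + j, fun i hi => ?_⟩
  obtain ⟨t, ht, htA⟩ := ha (j + i) (by omega)
  have ht' : t ≤ m := Finset.le_sup (f := id) ht
  refine ⟨t, Finset.mem_range.2 (by omega), ?_⟩
  have heq : a + (j + i) + t = a + j + i + t := by ring
  rw [heq] at htA
  rcases hsub htA with h | h
  · exfalso
    have hnot := hjA (i + t) (Finset.mem_range.2 (by omega))
    have heq2 : a + j + (i + t) = a + j + i + t := by ring
    rw [heq2] at hnot
    exact hnot h
  · exact h

lemma aux_fin : ∀ (r : ℕ) (g : Fin r → Set ℕ) (A : Set ℕ), PiecewiseSyndetic A →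
    (∀ n ∈ A, ∃ i, n ∈ g i) → ∃ i, PiecewiseSyndetic (g i) := by
  intro r
  induction r with
  | zero =>
    rintro g A ⟨F, hF⟩ hcov
    obtain ⟨a, ha⟩ := hF 1
    obtain ⟨t, _, htA⟩ := ha 0 one_pos
    exact (hcov _ htA).elim fun i _ => i.elim0
  | succ r ih =>
    intro g A hA hcov
    rcases two_cell hA (fun n hn => show n ∈ g 0 ∪ (A \ g 0) by
      by_cases h : n ∈ g 0
      · exact Or.inl h
      · exact Or.inr ⟨hn, h⟩) with h | h
    · exact ⟨0, h⟩
    · obtain ⟨i, hi⟩ := ih (fun i => g i.succ) _ h (fun n hn => by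
        obtain ⟨i0, hi0⟩ := hcov n hn.1
        have hne : i0 ≠ 0 := fun h0 => hn.2 (h0 ▸ hi0)
        obtain ⟨i', rfl⟩ := Fin.eq_succ_of_ne_zero hne
        exact ⟨i', hi0⟩)
      exact ⟨i.succ, hi⟩

/-- Piecewise syndeticity is partition regular; consequently in any finite partition
of `ℕ` at least one cell is piecewise syndetic. -/
theorem stmt_19 :
    (∀ A A₁ A₂ : Set ℕ, PiecewiseSyndetic A → A = A₁ ∪ A₂ →
      PiecewiseSyndetic A₁ ∨ PiecewiseSyndetic A₂) ∧
    (∀ (r : ℕ) (C : ℕ → Fin r), ∃ c : Fin r, PiecewiseSyndetic {n | C n = c}) := by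
  constructor
  · intro A A₁ A₂ hA hEq
    exact two_cell hA (hEq ▸ Set.Subset.rfl)
  · intro r C
    have huniv : PiecewiseSyndetic (Set.univ : Set ℕ) :=
      ⟨{0}, fun L => ⟨0, fun i _ => ⟨0, Finset.mem_singleton_self 0, Set.mem_univ _⟩⟩⟩
    exact aux_fin r (fun c => {n | C n = c}) Set.univ huniv (fun n _ => ⟨C n, rfl⟩)
end
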